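/- Let Δ be strictly causal on ℓⁿ and suppose for some ρ > 0 and 0 ≤ γ < 1 it holds that ‖Δ(x)‖_p ≤ γ‖x‖_p for all x with ‖x‖_p < ρ. Then the operator (I - Δ)⁻¹ is continuous at 0 as a map ℓⁿ_p → ℓⁿ_p: for every ε > 0 there exists δ > 0 such that ‖w‖_p < δ implies ‖(I - Δ)⁻¹(w)‖_p < ε. -/

import Mathlib

open scoped ENNReal NNReal

/-- The ℓ_p norm of a sequence, valued in `ℝ≥0∞` (sup norm for `p = ∞`). -/
noncomputable def pNorm (p : ℝ≥0∞) {E : Type*} [NormedAddCommGroup E] (x : ℕ → E) : ℝ≥0∞ :=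
  if p = ∞ then ⨆ k, (‖x k‖₊ : ℝ≥0∞)
  else (∑' k, (‖x k‖₊ : ℝ≥0∞) ^ p.toReal) ^ (1 / p.toReal)

/-- A strictly causal operator: the t-th output depends only on inputs 0..t-1. -/
def StrictlyCausal {E F : Type*} (Q : (ℕ → E) → (ℕ → F)) : Prop :=
  ∀ x y : ℕ → E, ∀ t, (∀ s, s < t → x s = y s) → Q x t = Q y t

/-!
By strict causality, the truncation at time `T + 1` of a solution of `y = Δ y + w` only sees
`Δ` applied to the truncation of `y` at time `T`. Hence if `‖w‖_p ≤ (1 - γ) r` for some `r < ρ`,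
an induction on `T` keeps every truncation of `y` in the ball of radius `r`, where the gain bound
applies; `‖y‖_p ≤ r` then follows from lower semicontinuity of the `ℓ_p` norm under pointwise
limits.
-/

open MeasureTheory Set Filter

section

variable {E : Type*} [NormedAddCommGroup E]

theorem pNorm_eq_eLpNorm_count {p : ℝ≥0∞} (hp : p ≠ 0) (x : ℕ → E) :
    pNorm p x = eLpNorm x p .count := by
  unfold pNorm
  split_ifs with htop
  · simp [htop, enorm]
  · simp [eLpNorm_eq_eLpNorm' hp htop, eLpNorm', lintegral_count, enorm]

theorem eLpNorm_count_le_of_forall_indicator_Iio_le {p r : ℝ≥0∞} {x : ℕ → E}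
    (h : ∀ T, eLpNorm ((Iio T).indicator x) p .count ≤ r) : eLpNorm x p .count ≤ r := by
  refine Lp.eLpNorm_le_of_ae_tendsto (u := atTop) (.of_forall h) (fun _ => .of_discrete)
    (.of_forall fun k => tendsto_const_nhds.congr' ?_)
  filter_upwards [eventually_gt_atTop k] with T hT
  exact (indicator_of_mem (mem_Iio.2 hT) x).symm

theorem StrictlyCausal.apply_indicator_Iio {F : Type*} {Q : (ℕ → E) → ℕ → F}
    (hQ : StrictlyCausal Q) (x : ℕ → E) {T t : ℕ} (ht : t ≤ T) :
    Q ((Iio T).indicator x) t = Q x t :=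
  hQ _ _ t fun s hs => indicator_of_mem (mem_Iio.2 (by omega)) x

theorem StrictlyCausal.indicator_Iio_succ_of_eq_add {Δ : (ℕ → E) → ℕ → E}
    (hΔc : StrictlyCausal Δ) {w y : ℕ → E} (hy : ∀ t, y t = Δ y t + w t) (T : ℕ) :
    (Iio (T + 1)).indicator y = (Iio (T + 1)).indicator (Δ ((Iio T).indicator y) + w) :=
  indicator_congr fun t ht => by
    rw [Pi.add_apply, hΔc.apply_indicator_Iio y (Nat.lt_succ_iff.1 ht), hy t]

theorem eLpNorm_count_le_of_eq_add_of_gain {p ρ γ r : ℝ≥0∞} (hp : 1 ≤ p)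
    {Δ : (ℕ → E) → ℕ → E} (hΔc : StrictlyCausal Δ)
    (hΔ : ∀ x, eLpNorm x p .count < ρ → eLpNorm (Δ x) p .count ≤ γ * eLpNorm x p .count)
    {w y : ℕ → E} (hy : ∀ t, y t = Δ y t + w t) (hrρ : r < ρ)
    (hgain : γ * r + eLpNorm w p .count ≤ r) :
    eLpNorm y p .count ≤ r := by
  refine eLpNorm_count_le_of_forall_indicator_Iio_le fun T => ?_
  induction T with
  | zero => simp
  | succ T ih =>
    calc eLpNorm ((Iio (T + 1)).indicator y) p .count
        ≤ eLpNorm (Δ ((Iio T).indicator y) + w) p .count := by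
          rw [hΔc.indicator_Iio_succ_of_eq_add hy]
          exact eLpNorm_indicator_le _
      _ ≤ eLpNorm (Δ ((Iio T).indicator y)) p .count + eLpNorm w p .count :=
          eLpNorm_add_le .of_discrete .of_discrete hp
      _ ≤ γ * r + eLpNorm w p .count := by
          gcongr
          exact (hΔ _ (ih.trans_lt hrρ)).trans (by gcongr)
      _ ≤ r := hgain

end

/-- if `Δ` is strictly causal with `‖Δ(x)‖_p ≤ γ‖x‖_p` for `‖x‖_p < ρ`,
`0 ≤ γ < 1`, `ρ > 0`, then `(I - Δ)⁻¹` is continuous at `0`: for every `ε > 0` there is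
`δ > 0` such that `‖w‖_p < δ` implies that every solution `y` of `y = Δ(y) + w` satisfies
`‖y‖_p < ε`. -/
theorem small_gain_continuity_at_zero {E : Type*} [NormedAddCommGroup E]
    (p : ℝ≥0∞) (hp : 1 ≤ p)
    (Δ : (ℕ → E) → (ℕ → E)) (hΔc : StrictlyCausal Δ)
    (ρ : ℝ≥0∞) (hρ : 0 < ρ)
    (γ : ℝ≥0) (hγ : γ < 1)
    (hΔ : ∀ x : ℕ → E, pNorm p x < ρ → pNorm p (Δ x) ≤ γ * pNorm p x) :
    ∀ ε : ℝ≥0∞, 0 < ε → ∃ δ : ℝ≥0∞, 0 < δ ∧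
      ∀ (w y : ℕ → E), (∀ t, y t = Δ y t + w t) → pNorm p w < δ → pNorm p y < ε := by
  intro ε hε
  simp only [pNorm_eq_eLpNorm_count (zero_lt_one.trans_le hp).ne'] at hΔ ⊢
  obtain ⟨r, hr0, hr⟩ := ENNReal.lt_iff_exists_nnreal_btwn.1 (lt_min hε hρ)
  have hsplit : γ * r + (1 - γ) * r = r := by
    rw [← add_mul, add_tsub_cancel_of_le hγ.le, one_mul]
  refine ⟨((1 - γ) * r : ℝ≥0),
    ENNReal.coe_pos.2 (mul_pos (tsub_pos_of_lt hγ) (ENNReal.coe_pos.1 hr0)),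
    fun w y hy hw => ?_⟩
  refine lt_of_le_of_lt ?_ (hr.trans_le (min_le_left _ _))
  refine eLpNorm_count_le_of_eq_add_of_gain hp hΔc hΔ hy (hr.trans_le (min_le_right _ _)) ?_
  calc (γ : ℝ≥0∞) * r + eLpNorm w p .count ≤ γ * r + ((1 - γ) * r : ℝ≥0) := by gcongr
    _ = r := by exact_mod_cast hsplit
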